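/- arXiv:1703.08134 — 5 statements merged into one kernel-verified Lean document; each statement's English description precedes it below -/
import Mathlib

section
/- Let R and R' be weighted unilateral shifts on ℓ²(ℕ) with weights (c_k)_{k≥1} and (c'_k)_{k≥1} respectively, where 0 ≤ c_k ≤ c'_k for all k ≥ 1. Then for every n ∈ ℕ, the moment ⟨e_0, (R + R*)^n e_0⟩ is a nonnegative real number which is at most ⟨e_0, (R' + R'*)^n e_0⟩. -/
/-!
In the basis `(e k)`, `T = R + R*` is the Jacobi matrix with zero diagonal and off-diagonal
entries `c (k + 1)`, so the entries of its powers obey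
`⟪e (k + 1), T ^ (n + 1) x⟫ = c (k + 1) ⟪e k, T ^ n x⟫ + c (k + 2) ⟪e (k + 2), T ^ n x⟫` and
`⟪e 0, T ^ (n + 1) x⟫ = c 1 ⟪e 1, T ^ n x⟫`. The coefficients are nonnegative and monotone in the
weights, hence, by induction on `n`, so is every entry `⟪e k, T ^ n (e j)⟫`.
-/

open MeasureTheory
open scoped InnerProductSpace ComplexOrder

noncomputable abbrev ell2 : Type := lp (fun _ : ℕ => ℂ) 2

/-- The canonical orthonormal basis vectors of `ℓ²(ℕ)`. -/
noncomputable def e (k : ℕ) : ell2 := lp.single 2 k 1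

lemma inner_e_left (j : ℕ) (x : ell2) : ⟪e j, x⟫_ℂ = x j := by
  simp [e, lp.inner_single_left]

lemma inner_e_e (j k : ℕ) : ⟪e j, e k⟫_ℂ = if j = k then 1 else 0 := by
  rw [inner_e_left, e, lp.single_apply, Pi.single_apply]

lemma ell2_ext_inner_e {x y : ell2} (h : ∀ j, ⟪e j, x⟫_ℂ = ⟪e j, y⟫_ℂ) : x = y :=
  lp.ext <| funext fun j => by simpa [inner_e_left] using h j

lemma mul_nonneg_and_mul_le_mul {α : Type*} [Semiring α] [PartialOrder α] [IsOrderedRing α]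
    {a a' x x' : α} (ha : 0 ≤ a ∧ a ≤ a') (hx : 0 ≤ x ∧ x ≤ x') :
    0 ≤ a * x ∧ a * x ≤ a' * x' :=
  ⟨mul_nonneg ha.1 hx.1, mul_le_mul ha.2 hx.2 hx.1 (ha.1.trans ha.2)⟩

section WeightedShift

variable (c : ℕ → ℝ) {R : ell2 →L[ℂ] ell2}
  (hR : ∀ k : ℕ, R (e k) = (c (k + 1) : ℂ) • e (k + 1))
include hR

lemma adjoint_weightedShift_e_zero : ContinuousLinearMap.adjoint R (e 0) = 0 := by
  refine ell2_ext_inner_e fun j => ?_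
  rw [ContinuousLinearMap.adjoint_inner_right, hR j]
  simp [inner_e_e]

lemma adjoint_weightedShift_e_succ (k : ℕ) :
    ContinuousLinearMap.adjoint R (e (k + 1)) = (c (k + 1) : ℂ) • e k := by
  refine ell2_ext_inner_e fun j => ?_
  rw [ContinuousLinearMap.adjoint_inner_right, hR j, inner_smul_left, inner_smul_right,
    inner_e_e, inner_e_e]
  by_cases h : j = k <;> simp [h, Complex.conj_ofReal]

lemma inner_e_adjoint_weightedShift (k : ℕ) (y : ell2) :
    ⟪e k, ContinuousLinearMap.adjoint R y⟫_ℂ = (c (k + 1) : ℂ) * ⟪e (k + 1), y⟫_ℂ := by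
  rw [ContinuousLinearMap.adjoint_inner_right, hR k, inner_smul_left, Complex.conj_ofReal]

lemma inner_e_zero_weightedShift_add_adjoint (y : ell2) :
    ⟪e 0, (R + ContinuousLinearMap.adjoint R) y⟫_ℂ = (c 1 : ℂ) * ⟪e 1, y⟫_ℂ := by
  rw [add_apply, inner_add_right, ← ContinuousLinearMap.adjoint_inner_left,
    adjoint_weightedShift_e_zero c hR, inner_zero_left, zero_add,
    inner_e_adjoint_weightedShift c hR]

lemma inner_e_succ_weightedShift_add_adjoint (k : ℕ) (y : ell2) :
    ⟪e (k + 1), (R + ContinuousLinearMap.adjoint R) y⟫_ℂ =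
      (c (k + 1) : ℂ) * ⟪e k, y⟫_ℂ + (c (k + 2) : ℂ) * ⟪e (k + 2), y⟫_ℂ := by
  rw [add_apply, inner_add_right, ← ContinuousLinearMap.adjoint_inner_left,
    adjoint_weightedShift_e_succ c hR, inner_smul_left, Complex.conj_ofReal,
    inner_e_adjoint_weightedShift c hR]

end WeightedShift

lemma inner_e_pow_weightedShift_add_adjoint_mono (c c' : ℕ → ℝ)
    (hcc' : ∀ k : ℕ, 0 ≤ c (k + 1) ∧ c (k + 1) ≤ c' (k + 1))
    {R R' : ell2 →L[ℂ] ell2}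
    (hR : ∀ k : ℕ, R (e k) = (c (k + 1) : ℂ) • e (k + 1))
    (hR' : ∀ k : ℕ, R' (e k) = (c' (k + 1) : ℂ) • e (k + 1)) (j n k : ℕ) :
    0 ≤ ⟪e k, ((R + ContinuousLinearMap.adjoint R) ^ n) (e j)⟫_ℂ ∧
    ⟪e k, ((R + ContinuousLinearMap.adjoint R) ^ n) (e j)⟫_ℂ ≤
      ⟪e k, ((R' + ContinuousLinearMap.adjoint R') ^ n) (e j)⟫_ℂ := by
  have hweight (k : ℕ) : (0 : ℂ) ≤ c (k + 1) ∧ (c (k + 1) : ℂ) ≤ c' (k + 1) :=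
    ⟨Complex.zero_le_real.mpr (hcc' k).1, Complex.real_le_real.mpr (hcc' k).2⟩
  induction n generalizing k with
  | zero =>
    simp only [pow_zero, one_apply_eq_self, inner_e_e]
    split_ifs <;> simp
  | succ n ih =>
    simp only [pow_succ', mul_apply_eq_comp]
    cases k with
    | zero =>
      rw [inner_e_zero_weightedShift_add_adjoint c hR,
        inner_e_zero_weightedShift_add_adjoint c' hR']
      exact mul_nonneg_and_mul_le_mul (hweight 0) (ih 1)
    | succ k =>
      rw [inner_e_succ_weightedShift_add_adjoint c hR,
        inner_e_succ_weightedShift_add_adjoint c' hR']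
      have hlower := mul_nonneg_and_mul_le_mul (hweight k) (ih k)
      have hupper := mul_nonneg_and_mul_le_mul (hweight (k + 1)) (ih (k + 2))
      exact ⟨add_nonneg hlower.1 hupper.1, add_le_add hlower.2 hupper.2⟩

/-- Monotonicity of the moments of the real part of a weighted unilateral shift in the
weights: if `0 ≤ c_k ≤ c'_k` then the moments of `R + R*` are nonnegative reals dominated by
the corresponding moments of `R' + R'*`.  (Order on `ℂ` is the `ComplexOrder`.) -/
theorem moments_monotone (c c' : ℕ → ℝ)
    (hcc' : ∀ k : ℕ, 0 ≤ c (k + 1) ∧ c (k + 1) ≤ c' (k + 1))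
    (R R' : ell2 →L[ℂ] ell2)
    (hR : ∀ k : ℕ, R (e k) = (c (k + 1) : ℂ) • e (k + 1))
    (hR' : ∀ k : ℕ, R' (e k) = (c' (k + 1) : ℂ) • e (k + 1)) (n : ℕ) :
    0 ≤ ⟪e 0, ((R + ContinuousLinearMap.adjoint R) ^ n) (e 0)⟫_ℂ ∧
    ⟪e 0, ((R + ContinuousLinearMap.adjoint R) ^ n) (e 0)⟫_ℂ ≤
      ⟪e 0, ((R' + ContinuousLinearMap.adjoint R') ^ n) (e 0)⟫_ℂ :=
  inner_e_pow_weightedShift_add_adjoint_mono c c' hcc' hR hR' 0 n 0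
end

section
/- Let R be a weighted unilateral shift on ℓ²(ℕ) with weights (c_k)_{k≥1} satisfying c_k ∈ (0,1] for all k and c_k → 1 as k → ∞. Then the operator norm of R + R* equals 2. -/
open MeasureTheory Filter
open scoped InnerProductSpace ComplexOrder Topology

/-! The weights have modulus at most one and `R` maps the orthonormal basis `(eₖ)` to the
orthogonal family `(cₖ₊₁ eₖ₊₁)`, so `‖R‖ ≤ 1` and `‖R + R*‖ ≤ 2`. Conversely, the flat vector
`x = e₀ + ⋯ + eₙ` has `‖x‖² = n + 1` and `Re ⟪x, (R + R*) x⟫ = 2 (c₁ + ⋯ + cₙ)`; since the Cesàro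
means of `cₖ → 1` tend to `1`, this forces `‖R + R*‖ ≥ 2`. -/

open Finset ContinuousLinearMap RCLike

theorem le_of_tendsto_of_sum_range_le_mul_succ {u : ℕ → ℝ} {l C : ℝ}
    (hu : Tendsto u atTop (𝓝 l)) (hC : ∀ n : ℕ, ∑ k ∈ range n, u k ≤ C * (n + 1)) : l ≤ C := by
  have hmean : Tendsto (fun n : ℕ => (∑ k ∈ range n, u k) / (n + 1)) atTop (𝓝 l) := by
    refine (one_mul l ▸ (tendsto_natCast_div_add_atTop (1 : ℝ)).mul hu.cesaro).congr fun n => ?_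
    rcases eq_or_ne n 0 with rfl | hn
    · simp
    · field_simp
  exact le_of_tendsto' (by simpa using hmean) fun n => (div_le_iff₀ (by positivity)).2 (hC n)

section WeightedShift

variable {𝕜 E : Type*} [RCLike 𝕜] [NormedAddCommGroup E] [InnerProductSpace 𝕜 E]

theorem Orthonormal.norm_sum_smul_sq {ι : Type*} {v : ι → E} (hv : Orthonormal 𝕜 v) (l : ι → 𝕜)
    (s : Finset ι) : ‖∑ i ∈ s, l i • v i‖ ^ 2 = ∑ i ∈ s, ‖l i‖ ^ 2 := by
  rw [@norm_sq_eq_re_inner 𝕜, hv.inner_sum, map_sum]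
  simp [RCLike.conj_mul]

theorem HilbertBasis.opNorm_le_one_of_apply_eq_smul_succ (b : HilbertBasis ℕ 𝕜 E)
    {T : E →L[𝕜] E} {a : ℕ → 𝕜} (ha : ∀ k, ‖a k‖ ≤ 1) (hT : ∀ k, T (b k) = a k • b (k + 1)) :
    ‖T‖ ≤ 1 := by
  refine T.opNorm_le_bound zero_le_one fun x => ?_
  have hsum : HasSum (fun k => (⟪b k, x⟫_𝕜 * a k) • b (k + 1)) (T x) := by
    simpa [hT, smul_smul, b.repr_apply_apply] using (b.hasSum_repr x).mapL T
  have hpartial : ∀ n, ‖∑ k ∈ range n, (⟪b k, x⟫_𝕜 * a k) • b (k + 1)‖ ^ 2 ≤ ‖x‖ ^ 2 := by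
    intro n
    calc _ = ∑ k ∈ range n, ‖⟪b k, x⟫_𝕜 * a k‖ ^ 2 :=
          (b.orthonormal.comp _ (add_left_injective 1)).norm_sum_smul_sq _ _
      _ ≤ ∑ k ∈ range n, ‖⟪b k, x⟫_𝕜‖ ^ 2 := by
          gcongr with k
          rw [norm_mul]
          exact mul_le_of_le_one_right (norm_nonneg _) (ha k)
      _ ≤ ‖x‖ ^ 2 := b.orthonormal.sum_inner_products_le x
  have hsq : ‖T x‖ ^ 2 ≤ ‖x‖ ^ 2 := le_of_tendsto' (hsum.tendsto_sum_nat.norm.pow 2) hpartial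
  rw [one_mul]
  exact le_of_sq_le_sq hsq (norm_nonneg x)

theorem Orthonormal.inner_sum_range_apply_sum_range {v : ℕ → E} (hv : Orthonormal 𝕜 v)
    {T : E →L[𝕜] E} {a : ℕ → 𝕜} (hT : ∀ k, T (v k) = a k • v (k + 1)) (n : ℕ) :
    ⟪∑ k ∈ range (n + 1), v k, T (∑ k ∈ range (n + 1), v k)⟫_𝕜 = ∑ k ∈ range n, a k := by
  simp only [map_sum, hT, sum_inner, inner_sum, inner_smul_right, orthonormal_iff_ite.mp hv,
    sum_ite_eq', mem_range, mul_ite, mul_one, mul_zero]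
  rw [sum_range_succ, if_neg (by omega), add_zero]
  exact sum_congr rfl fun k hk => if_pos (by simpa using hk)

theorem Orthonormal.two_mul_sum_range_re_le_norm_add_adjoint [CompleteSpace E] {v : ℕ → E}
    (hv : Orthonormal 𝕜 v) {T : E →L[𝕜] E} {a : ℕ → 𝕜} (hT : ∀ k, T (v k) = a k • v (k + 1))
    (n : ℕ) : 2 * ∑ k ∈ range n, re (a k) ≤ ‖T + adjoint T‖ * (n + 1) := by
  set x := ∑ k ∈ range (n + 1), v k
  have hx : ‖x‖ ^ 2 = n + 1 := by
    simpa using hv.norm_sum_smul_sq (fun _ => (1 : 𝕜)) (range (n + 1))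
  have hre : re ⟪x, (T + adjoint T) x⟫_𝕜 = 2 * ∑ k ∈ range n, re (a k) := by
    have hxTx : ⟪x, T x⟫_𝕜 = ∑ k ∈ range n, a k := hv.inner_sum_range_apply_sum_range hT n
    rw [add_apply, inner_add_right, map_add, adjoint_inner_right, inner_re_symm (T x), hxTx,
      map_sum]
    ring
  calc 2 * ∑ k ∈ range n, re (a k) = re ⟪x, (T + adjoint T) x⟫_𝕜 := hre.symm
    _ ≤ ‖x‖ * ‖(T + adjoint T) x‖ := re_inner_le_norm _ _
    _ ≤ ‖x‖ * (‖T + adjoint T‖ * ‖x‖) := by gcongr; exact le_opNorm _ _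
    _ = ‖T + adjoint T‖ * (n + 1) := by rw [← hx]; ring

theorem HilbertBasis.default_apply {ι : Type*} [DecidableEq ι] (i : ι) :
    (default : HilbertBasis ι 𝕜 (lp (fun _ : ι => 𝕜) 2)) i = lp.single 2 i 1 :=
  (HilbertBasis.repr_symm_single _ i).symm

end WeightedShift

/-- If the weights of a weighted unilateral shift `R` lie in `(0,1]` and tend to `1`, then
`‖R + R*‖ = 2`. -/
theorem norm_re_shift_eq_two (c : ℕ → ℝ)
    (hc : ∀ k : ℕ, 0 < c (k + 1) ∧ c (k + 1) ≤ 1)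
    (hlim : Tendsto (fun k : ℕ => c (k + 1)) atTop (𝓝 1))
    (R : ell2 →L[ℂ] ell2)
    (hR : ∀ k : ℕ, R (e k) = (c (k + 1) : ℂ) • e (k + 1)) :
    ‖R + ContinuousLinearMap.adjoint R‖ = 2 := by
  set b : HilbertBasis ℕ ℂ ell2 := default
  have hb : ⇑b = e := funext HilbertBasis.default_apply
  rw [← hb] at hR
  have hweights : ∀ k, ‖(c (k + 1) : ℂ)‖ ≤ 1 := fun k => by
    rw [Complex.norm_real, Real.norm_eq_abs, abs_le]
    exact ⟨by linarith [(hc k).1], (hc k).2⟩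
  refine le_antisymm ?_ ?_
  · calc ‖R + adjoint R‖ ≤ ‖R‖ + ‖adjoint R‖ := norm_add_le _ _
      _ = 2 * ‖R‖ := by rw [adjoint.norm_map]; ring
      _ ≤ 2 := by linarith [b.opNorm_le_one_of_apply_eq_smul_succ hweights hR]
  · refine le_of_tendsto_of_sum_range_le_mul_succ (by simpa using hlim.const_mul 2) fun n => ?_
    simpa [← mul_sum] using b.orthonormal.two_mul_sum_range_re_le_norm_add_adjoint hR n
end

section
/- Let μ be a finite Borel measure on ℝ supported in [−1,1] with μ({−1,1}) = 0, and suppose that for every k ∈ ℕ one has ∫ t^{2k} dμ(t) ≤ C_k / 4^k, where C_k is the k-th Catalan number. Then the function t ↦ log(1 − t²)/(1 − t²) is μ-integrable on (−1,1); in particular ∫ log(1 − t²)/(1 − t²) dμ(t) > −∞. -/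
/-!
For `|t| < 1`, the Cauchy product of `-log (1 - x) = ∑ xᵏ / k` with `(1 - x)⁻¹ = ∑ xʲ` at
`x = t²` gives `|log (1 - t²) / (1 - t²)| = ∑ Hₙ t²ⁿ` with nonnegative harmonic-number
coefficients. By monotone convergence the integral of the absolute value is at most
`∑ Hₙ Cₙ / 4ⁿ`, which converges because `Hₙ = O(log n)` while
`Cₙ / 4ⁿ ≤ (n + 1)^(-3/2)`.
-/

open MeasureTheory
open scoped ENNReal

theorem Nat.centralBinom_sq_mul_le_sixteen_pow (n : ℕ) :
    n.centralBinom ^ 2 * (2 * n + 1) ≤ 16 ^ n := by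
  induction n with
  | zero => simp
  | succ n ih =>
    have key : (n + 1) ^ 2 * ((n + 1).centralBinom ^ 2 * (2 * (n + 1) + 1))
        = 4 * (2 * n + 1) * (2 * n + 3) * (n.centralBinom ^ 2 * (2 * n + 1)) := by
      rw [← Nat.mul_assoc, ← Nat.mul_pow, Nat.succ_mul_centralBinom_succ]; ring
    refine Nat.le_of_mul_le_mul_left ?_ (by positivity : 0 < (n + 1) ^ 2)
    calc (n + 1) ^ 2 * ((n + 1).centralBinom ^ 2 * (2 * (n + 1) + 1))
        ≤ 4 * (2 * n + 1) * (2 * n + 3) * 16 ^ n := key ▸ Nat.mul_le_mul_left _ ih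
      _ ≤ 16 * (n + 1) ^ 2 * 16 ^ n := Nat.mul_le_mul_right _ (by nlinarith)
      _ = (n + 1) ^ 2 * 16 ^ (n + 1) := by ring

theorem catalan_div_four_pow_le (n : ℕ) :
    (catalan n : ℝ) / 4 ^ n ≤ ((n : ℝ) + 1) ^ (-(3 / 2 : ℝ)) := by
  have hn : (0 : ℝ) < n + 1 := by positivity
  have hcb : ((n : ℝ) + 1) * catalan n = n.centralBinom := by
    exact_mod_cast succ_mul_catalan_eq_centralBinom n
  have h16 : ((n + 1) * catalan n : ℝ) ^ 2 * (2 * n + 1) ≤ (4 ^ n) ^ 2 := by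
    rw [hcb, ← pow_mul, mul_comm n, pow_mul]
    exact_mod_cast n.centralBinom_sq_mul_le_sixteen_pow
  have hsq : (((n : ℝ) + 1) ^ (-(3 / 2 : ℝ))) ^ 2 = 1 / ((n : ℝ) + 1) ^ 3 := by
    rw [← Real.rpow_natCast, ← Real.rpow_mul hn.le,
      show -(3 / 2 : ℝ) * ((2 : ℕ) : ℝ) = -((3 : ℕ) : ℝ) by norm_num, Real.rpow_neg hn.le,
      Real.rpow_natCast, one_div]
  refine (pow_le_pow_iff_left₀ (by positivity) (by positivity) two_ne_zero).mp ?_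
  rw [hsq, le_div_iff₀ (by positivity), div_pow, div_mul_eq_mul_div, div_le_one (by positivity)]
  calc (catalan n : ℝ) ^ 2 * ((n : ℝ) + 1) ^ 3
      = ((n + 1) * catalan n : ℝ) ^ 2 * (n + 1 : ℝ) := by ring
    _ ≤ ((n + 1) * catalan n : ℝ) ^ 2 * (2 * n + 1 : ℝ) := by gcongr; linarith
    _ ≤ (4 ^ n) ^ 2 := h16

theorem harmonic_nonneg (n : ℕ) : 0 ≤ harmonic n := by
  unfold harmonic
  positivity

theorem harmonic_le_five_mul_rpow (n : ℕ) :
    (harmonic n : ℝ) ≤ 5 * ((n : ℝ) + 1) ^ (1 / 4 : ℝ) := by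
  have hlog : Real.log n ≤ 4 * ((n : ℝ) + 1) ^ (1 / 4 : ℝ) :=
    calc Real.log n ≤ (n : ℝ) ^ (1 / 4 : ℝ) / (1 / 4) :=
          Real.log_le_rpow_div n.cast_nonneg (by norm_num)
      _ = 4 * (n : ℝ) ^ (1 / 4 : ℝ) := by ring
      _ ≤ 4 * ((n : ℝ) + 1) ^ (1 / 4 : ℝ) := by gcongr; linarith
  have hone : (1 : ℝ) ≤ ((n : ℝ) + 1) ^ (1 / 4 : ℝ) :=
    Real.one_le_rpow (by linarith [n.cast_nonneg (α := ℝ)]) (by norm_num)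
  linarith [harmonic_le_one_add_log n]

theorem summable_harmonic_mul_catalan_div_four_pow :
    Summable fun n : ℕ => (harmonic n : ℝ) * (catalan n / 4 ^ n) := by
  have hsum : Summable fun n : ℕ => 5 * ((n : ℝ) + 1) ^ (-(5 / 4 : ℝ)) := by
    refine ((Real.summable_one_div_nat_add_rpow 1 (5 / 4)).mpr (by norm_num)).mul_left 5
      |>.congr fun n => ?_
    rw [abs_of_pos (by positivity), Real.rpow_neg (by positivity), one_div]
  refine hsum.of_nonneg_of_le
    (fun n => mul_nonneg (Rat.cast_nonneg.mpr (harmonic_nonneg n)) (by positivity)) fun n => ?_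
  have hn : (0 : ℝ) < n + 1 := by positivity
  calc (harmonic n : ℝ) * (catalan n / 4 ^ n)
      ≤ 5 * ((n : ℝ) + 1) ^ (1 / 4 : ℝ) * ((n : ℝ) + 1) ^ (-(3 / 2 : ℝ)) :=
        mul_le_mul (harmonic_le_five_mul_rpow n) (catalan_div_four_pow_le n) (by positivity)
          (by positivity)
    _ = 5 * ((n : ℝ) + 1) ^ (-(5 / 4 : ℝ)) := by
        rw [mul_assoc, ← Real.rpow_add hn]; norm_num

theorem harmonic_succ_mul_pow_eq_sum (x : ℝ) (n : ℕ) :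
    (harmonic (n + 1) : ℝ) * x ^ (n + 1)
      = ∑ k ∈ Finset.range (n + 1), x ^ (k + 1) / (k + 1) * x ^ (n - k) := by
  rw [harmonic, Rat.cast_sum, Finset.sum_mul]
  refine Finset.sum_congr rfl fun k hk => ?_
  rw [div_mul_eq_mul_div, ← pow_add, Nat.add_comm k 1, Nat.add_assoc,
    Nat.add_sub_of_le (Finset.mem_range_succ_iff.mp hk)]
  push_cast
  ring

theorem hasSum_harmonic_mul_pow {x : ℝ} (hx : |x| < 1) :
    HasSum (fun n => (harmonic n : ℝ) * x ^ n) (-Real.log (1 - x) / (1 - x)) := by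
  have hlog := Real.hasSum_pow_div_log_of_abs_lt_one hx
  have hgeo := hasSum_geometric_of_abs_lt_one hx
  have hlog_norm : Summable fun k : ℕ => ‖x ^ (k + 1) / (k + 1)‖ := by
    refine (Real.hasSum_pow_div_log_of_abs_lt_one ((abs_abs x).symm ▸ hx)).summable.congr
      fun k => ?_
    rw [norm_div, norm_pow, Real.norm_eq_abs, Real.norm_of_nonneg (by positivity)]
  have hgeo_norm : Summable fun k : ℕ => ‖x ^ k‖ := by
    simpa [abs_pow] using summable_geometric_of_lt_one (abs_nonneg x) hx
  have H := hasSum_sum_range_mul_of_summable_norm hlog_norm hgeo_norm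
  rw [hlog.tsum_eq, hgeo.tsum_eq, ← div_eq_mul_inv] at H
  rw [← hasSum_nat_add_iff' 1]
  simpa only [Finset.sum_range_one, harmonic_zero, Rat.cast_zero, zero_mul, sub_zero,
    harmonic_succ_mul_pow_eq_sum] using H

theorem integrableOn_of_hasSum_norm_of_moment_le {μ : Measure ℝ} {s : Set ℝ} {f : ℝ → ℝ}
    {c M : ℕ → ℝ} (hs : MeasurableSet s) (hf : AEStronglyMeasurable f (μ.restrict s))
    (hc : ∀ n, 0 ≤ c n) (hfs : ∀ t ∈ s, HasSum (fun n => c n * t ^ (2 * n)) ‖f t‖)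
    (hmom : ∀ n, ∫⁻ t, ENNReal.ofReal (t ^ (2 * n)) ∂μ ≤ ENNReal.ofReal (M n))
    (hM : Summable fun n => c n * M n) :
    IntegrableOn f s μ := by
  have hterm (n : ℕ) (t : ℝ) : 0 ≤ c n * t ^ (2 * n) := by
    rw [pow_mul]; exact mul_nonneg (hc n) (by positivity)
  refine ⟨hf, (hasFiniteIntegral_iff_norm f).mpr ?_⟩
  calc ∫⁻ t in s, ENNReal.ofReal ‖f t‖ ∂μ
      = ∫⁻ t in s, ∑' n, ENNReal.ofReal (c n * t ^ (2 * n)) ∂μ := by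
        refine setLIntegral_congr_fun hs fun t ht => ?_
        rw [← (hfs t ht).tsum_eq, ENNReal.ofReal_tsum_of_nonneg (hterm · t) (hfs t ht).summable]
    _ = ∑' n, ENNReal.ofReal (c n) * ∫⁻ t in s, ENNReal.ofReal (t ^ (2 * n)) ∂μ := by
        rw [lintegral_tsum fun n => by fun_prop]
        simp_rw [ENNReal.ofReal_mul (hc _)]
        congr 1 with n
        exact lintegral_const_mul _ (by fun_prop)
    _ ≤ ∑' n, ENNReal.ofReal (c n * M n) := by
        gcongr with n
        rw [ENNReal.ofReal_mul (hc n)]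
        gcongr
        exact (setLIntegral_le_lintegral s _).trans (hmom n)
    _ < ∞ := hM.tsum_ofReal_lt_top

theorem integrable_log_one_sub_sq_div_general (μ : Measure ℝ)
    (hmom : ∀ k : ℕ, ∫⁻ t, ENNReal.ofReal (t ^ (2 * k)) ∂μ ≤
      ENNReal.ofReal ((catalan k : ℝ) / 4 ^ k)) :
    IntegrableOn (fun t : ℝ => Real.log (1 - t ^ 2) / (1 - t ^ 2)) (Set.Ioo (-1 : ℝ) 1) μ := by
  refine integrableOn_of_hasSum_norm_of_moment_le measurableSet_Ioo
    (by fun_prop : Measurable _).aestronglyMeasurable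
    (fun n => Rat.cast_nonneg.mpr (harmonic_nonneg n))
    (fun t ht => ?_) hmom summable_harmonic_mul_catalan_div_four_pow
  have hsq : t ^ 2 < 1 := by rw [sq_lt_one_iff_abs_lt_one, abs_lt]; exact ht
  have hlog : Real.log (1 - t ^ 2) ≤ 0 :=
    Real.log_nonpos (by linarith) (by linarith [sq_nonneg t])
  rw [Real.norm_eq_abs, abs_of_nonpos (div_nonpos_of_nonpos_of_nonneg hlog (by linarith)),
    ← neg_div]
  simpa only [pow_mul] using hasSum_harmonic_mul_pow (by rwa [abs_of_nonneg (sq_nonneg t)])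

/-- If `μ` is a finite Borel measure supported in `[-1,1]` with `μ {−1,1} = 0` whose even
moments are dominated by `C_k / 4^k` (Catalan numbers), then `t ↦ log(1−t²)/(1−t²)` is
`μ`-integrable on `(-1,1)`. -/
theorem integrable_log_one_sub_sq_div (μ : Measure ℝ) [IsFiniteMeasure μ]
    (hsupp : μ (Set.Icc (-1 : ℝ) 1)ᶜ = 0) (hpt : μ {(-1 : ℝ), 1} = 0)
    (hmom : ∀ k : ℕ, ∫⁻ t, ENNReal.ofReal (t ^ (2 * k)) ∂μ ≤
      ENNReal.ofReal ((catalan k : ℝ) / 4 ^ k)) :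
    IntegrableOn (fun t : ℝ => Real.log (1 - t ^ 2) / (1 - t ^ 2)) (Set.Ioo (-1 : ℝ) 1) μ :=
  integrable_log_one_sub_sq_div_general μ hmom
end

section
/- Let μ be a finite Borel measure on ℝ supported in [−1,1] with μ({−1,1}) = 0, and suppose that for every k ∈ ℕ one has ∫ t^{2k} dμ(t) ≤ C_k / 4^k, where C_k is the k-th Catalan number. Then the function t ↦ log(1 − t)/(1 − t²) is μ-integrable on (−1,1); in particular ∫ log(1 − t)/(1 − t²) dμ(t) > −∞. -/
open MeasureTheory
open scoped ENNReal

lemma cb_sq (k : ℕ) : Nat.centralBinom k ^ 2 * (k + 1) ≤ 16 ^ k := by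
  induction k with
  | zero => simp [Nat.centralBinom]
  | succ n ih =>
    have h := Nat.succ_mul_centralBinom_succ n
    have key : (2 * n + 1) ^ 2 * (n + 2) ≤ 4 * (n + 1) ^ 3 := by nlinarith
    have h2 : Nat.centralBinom (n+1) ^ 2 * (n + 2) * (n + 1) ^ 2
        = 4 * (2 * n + 1) ^ 2 * (Nat.centralBinom n ^ 2 * (n + 2)) := by
      have : ((n+1) * Nat.centralBinom (n+1)) ^ 2 = (2 * (2*n+1) * Nat.centralBinom n) ^ 2 := by
        rw [h]
      nlinarith [this]
    have h3 : Nat.centralBinom (n+1) ^ 2 * (n + 2) * (n + 1) ^ 2 ≤ 16 ^ (n+1) * (n+1) ^ 2 := by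
      rw [h2]
      calc 4 * (2 * n + 1) ^ 2 * (Nat.centralBinom n ^ 2 * (n + 2))
          ≤ 4 * (2 * n + 1) ^ 2 * (n + 2) * Nat.centralBinom n ^ 2 := by ring_nf; omega
        _ ≤ 16 * (n + 1) ^ 3 * Nat.centralBinom n ^ 2 := by
            nlinarith [key, Nat.centralBinom_pos n]
        _ = 16 * (n + 1) ^ 2 * (Nat.centralBinom n ^ 2 * (n + 1)) := by ring
        _ ≤ 16 * (n + 1) ^ 2 * 16 ^ n := by
            exact Nat.mul_le_mul_left _ ih
        _ = 16 ^ (n + 1) * (n + 1) ^ 2 := by ring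
    exact Nat.le_of_mul_le_mul_right h3 (by positivity)


lemma catalan_bound (k : ℕ) :
    (catalan k : ℝ) / 4 ^ k ≤ ((k : ℝ) + 1) ^ (-(3/2) : ℝ) := by
  have hN : (0:ℝ) < (k:ℝ) + 1 := by positivity
  have hcat : (catalan k : ℝ) * ((k:ℝ) + 1) = Nat.centralBinom k := by
    have := succ_mul_catalan_eq_centralBinom k
    push_cast [← this]; ring
  have hsq : (catalan k : ℝ) ^ 2 * ((k:ℝ)+1) ^ 3 ≤ 16 ^ k := by
    have h := cb_sq k
    have : ((Nat.centralBinom k : ℝ)) ^ 2 * ((k:ℝ) + 1) ≤ 16 ^ k := by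
      exact_mod_cast h
    calc (catalan k : ℝ) ^ 2 * ((k:ℝ)+1) ^ 3
        = ((catalan k : ℝ) * ((k:ℝ)+1)) ^ 2 * ((k:ℝ)+1) := by ring
      _ = ((Nat.centralBinom k : ℝ)) ^ 2 * ((k:ℝ)+1) := by rw [hcat]
      _ ≤ 16 ^ k := this
  have key : (catalan k : ℝ) * (((k:ℝ)+1) ^ ((3/2) : ℝ)) ≤ 4 ^ k := by
    have h2 : ((catalan k : ℝ) * (((k:ℝ)+1) ^ ((3/2) : ℝ))) ^ 2 ≤ ((4:ℝ) ^ k) ^ 2 := by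
      have hr : ((((k:ℝ)+1) ^ ((3/2) : ℝ))) ^ 2 = ((k:ℝ)+1) ^ 3 := by
        rw [← Real.rpow_natCast ((((k:ℝ)+1) ^ ((3/2) : ℝ))) 2, ← Real.rpow_mul hN.le,
          ← Real.rpow_natCast ((k:ℝ)+1) 3]
        norm_num
      calc ((catalan k : ℝ) * (((k:ℝ)+1) ^ ((3/2) : ℝ))) ^ 2
          = (catalan k : ℝ) ^ 2 * ((((k:ℝ)+1) ^ ((3/2) : ℝ)) ^ 2) := by ring
        _ = (catalan k : ℝ) ^ 2 * ((k:ℝ)+1) ^ 3 := by rw [hr]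
        _ ≤ 16 ^ k := hsq
        _ = ((4:ℝ) ^ k) ^ 2 := by rw [← pow_mul, mul_comm k 2, pow_mul]; norm_num
    have ha : (0:ℝ) ≤ (catalan k : ℝ) * (((k:ℝ)+1) ^ ((3/2) : ℝ)) := by positivity
    have hb : (0:ℝ) ≤ (4:ℝ) ^ k := by positivity
    nlinarith [h2, ha, hb]
  rw [Real.rpow_neg hN.le, div_le_iff₀ (by positivity : (0:ℝ) < 4 ^ k),
    inv_mul_eq_div, le_div_iff₀ (by positivity)]
  exact key


lemma ptwise_num {t : ℝ} (h1 : -1 < t) (h2 : t < 1) :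
    |Real.log (1 - t)| ≤ Real.log 2 - Real.log (1 - t ^ 2) := by
  have hden : (0:ℝ) < 1 - t ^ 2 := by nlinarith
  have hlt : (0:ℝ) < 1 - t := by linarith
  have h1t : (0:ℝ) < 1 + t := by linarith
  have hfact : Real.log (1 - t ^ 2) = Real.log (1 - t) + Real.log (1 + t) := by
    rw [← Real.log_mul (ne_of_gt hlt) (ne_of_gt h1t)]
    congr 1; ring
  rcases le_or_gt (Real.log (1 - t)) 0 with h | h
  · rw [abs_of_nonpos h, hfact]
    have : Real.log (1 + t) ≤ Real.log 2 := (Real.log_le_log_iff h1t two_pos).2 (by linarith)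
    linarith
  · rw [abs_of_pos h]
    have hl2 : Real.log (1 - t) ≤ Real.log 2 := (Real.log_le_log_iff hlt two_pos).2 (by linarith)
    have hnp : Real.log (1 - t ^ 2) ≤ 0 := Real.log_nonpos (by nlinarith) (by nlinarith)
    linarith

lemma ptwise {t : ℝ} (h1 : -1 < t) (h2 : t < 1) :
    |Real.log (1 - t) / (1 - t ^ 2)| ≤
      (Real.log 2 - Real.log (1 - t ^ 2)) / (1 - t ^ 2) := by
  have hden : (0:ℝ) < 1 - t ^ 2 := by nlinarith
  rw [abs_div, abs_of_pos hden]
  gcongr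
  exact ptwise_num h1 h2


lemma series_bound {t : ℝ} (h1 : -1 < t) (h2 : t < 1) :
    ENNReal.ofReal ((Real.log 2 - Real.log (1 - t ^ 2)) / (1 - t ^ 2)) ≤
      (∑' m : ℕ, ENNReal.ofReal (Real.log 2 * t ^ (2 * m))) +
      (∑' p : ℕ × ℕ, ENNReal.ofReal (t ^ (2 * (p.1 + 1 + p.2)) / (p.1 + 1))) := by
  set x := t ^ 2 with hx
  have hx0 : 0 ≤ x := sq_nonneg t
  have hx1 : x < 1 := by nlinarith
  have hl2 : (0:ℝ) ≤ Real.log 2 := Real.log_nonneg (by norm_num)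
  have hlognp : Real.log (1 - x) ≤ 0 := Real.log_nonpos (by linarith) (by linarith)
  have hgsum : Summable (fun m : ℕ => x ^ m) := summable_geometric_of_lt_one hx0 hx1
  have hg : ∑' m : ℕ, x ^ m = (1 - x)⁻¹ := tsum_geometric_of_lt_one hx0 hx1
  have hlog : HasSum (fun n : ℕ => x ^ (n + 1) / (n + 1)) (-Real.log (1 - x)) :=
    Real.hasSum_pow_div_log_of_abs_lt_one (by rwa [abs_of_nonneg hx0])
  have hnonneg1 : ∀ n : ℕ, 0 ≤ x ^ (n + 1) / ((n:ℝ) + 1) :=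
    fun n => div_nonneg (pow_nonneg hx0 _) (by positivity)
  have hprod : Summable (fun p : ℕ × ℕ => (x ^ (p.1 + 1) / ((p.1:ℝ) + 1)) * x ^ p.2) :=
    Summable.mul_of_nonneg hlog.summable hgsum hnonneg1 (fun m => pow_nonneg hx0 m)
  have hdecomp : (Real.log 2 - Real.log (1 - x)) / (1 - x)
      = Real.log 2 * (1 - x)⁻¹ + (-Real.log (1 - x)) * (1 - x)⁻¹ := by
    ring
  have hxinv : (0:ℝ) ≤ (1 - x)⁻¹ := inv_nonneg.2 (by linarith)
  rw [hdecomp, ENNReal.ofReal_add (mul_nonneg hl2 hxinv)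
    (mul_nonneg (neg_nonneg.2 hlognp) hxinv)]
  have hA : ENNReal.ofReal (Real.log 2 * (1 - x)⁻¹)
      = ∑' m : ℕ, ENNReal.ofReal (Real.log 2 * t ^ (2 * m)) := by
    have hreal : Real.log 2 * (1 - x)⁻¹ = ∑' m : ℕ, Real.log 2 * x ^ m := by
      rw [← hg, tsum_mul_left]
    calc ENNReal.ofReal (Real.log 2 * (1 - x)⁻¹)
        = ∑' m : ℕ, ENNReal.ofReal (Real.log 2 * x ^ m) := by
          rw [hreal]
          exact ENNReal.ofReal_tsum_of_nonneg
            (fun m => mul_nonneg hl2 (pow_nonneg hx0 m)) (hgsum.mul_left _)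
      _ = ∑' m : ℕ, ENNReal.ofReal (Real.log 2 * t ^ (2 * m)) :=
          tsum_congr fun m => by rw [hx, ← pow_mul]
  have hB : ENNReal.ofReal ((-Real.log (1 - x)) * (1 - x)⁻¹)
      = ∑' p : ℕ × ℕ, ENNReal.ofReal (t ^ (2 * (p.1 + 1 + p.2)) / (p.1 + 1)) := by
    have hreal : (-Real.log (1 - x)) * (1 - x)⁻¹
        = ∑' p : ℕ × ℕ, (x ^ (p.1 + 1) / ((p.1:ℝ) + 1)) * x ^ p.2 := by
      rw [← hg, ← hlog.tsum_eq]
      exact Summable.tsum_mul_tsum hlog.summable hgsum hprod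
    calc ENNReal.ofReal ((-Real.log (1 - x)) * (1 - x)⁻¹)
        = ∑' p : ℕ × ℕ, ENNReal.ofReal ((x ^ (p.1 + 1) / ((p.1:ℝ) + 1)) * x ^ p.2) := by
          rw [hreal]
          exact ENNReal.ofReal_tsum_of_nonneg
            (fun p => mul_nonneg (hnonneg1 p.1) (pow_nonneg hx0 p.2)) hprod
      _ = ∑' p : ℕ × ℕ, ENNReal.ofReal (t ^ (2 * (p.1 + 1 + p.2)) / (p.1 + 1)) := by
          refine tsum_congr fun p => ?_
          congr 1
          rw [div_mul_eq_mul_div, ← pow_add, hx, ← pow_mul]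
  rw [hA, hB]


lemma double_bound (n m : ℕ) :
    (((n:ℝ) + 1))⁻¹ * ((((n + 1 + m : ℕ)) : ℝ) + 1) ^ (-(3/2) : ℝ) ≤
      ((n:ℝ) + 1) ^ (-(5/4) : ℝ) * ((m:ℝ) + 1) ^ (-(5/4) : ℝ) := by
  have hcast : (((n + 1 + m : ℕ)) : ℝ) + 1 = ((n:ℝ) + 1) + ((m:ℝ) + 1) := by
    push_cast; ring
  rw [hcast]
  set A : ℝ := (n:ℝ) + 1 with hA'
  set B : ℝ := (m:ℝ) + 1 with hB'
  have hA : 0 < A := by positivity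
  have hB : 0 < B := by positivity
  have hS : 0 < A + B := by linarith
  have hAS : A ≤ A + B := by linarith
  have hBS : B ≤ A + B := by linarith
  have h54A : A ^ ((5/4) : ℝ) ≤ A * (A + B) ^ ((1/4) : ℝ) := by
    have e1 : A ^ ((5/4) : ℝ) = A ^ (1:ℝ) * A ^ ((1/4) : ℝ) := by
      rw [← Real.rpow_add hA]; norm_num
    rw [e1, Real.rpow_one]
    exact mul_le_mul_of_nonneg_left (Real.rpow_le_rpow hA.le hAS (by norm_num)) hA.le
  have h54B : B ^ ((5/4) : ℝ) ≤ (A + B) ^ ((5/4) : ℝ) :=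
    Real.rpow_le_rpow hB.le hBS (by norm_num)
  have h1 : A ^ ((5/4) : ℝ) * B ^ ((5/4) : ℝ) ≤ A * (A + B) ^ ((3/2) : ℝ) := by
    calc A ^ ((5/4) : ℝ) * B ^ ((5/4) : ℝ)
        ≤ (A * (A + B) ^ ((1/4) : ℝ)) * (A + B) ^ ((5/4) : ℝ) :=
          mul_le_mul h54A h54B (Real.rpow_nonneg hB.le _) (by positivity)
      _ = A * (A + B) ^ ((3/2) : ℝ) := by
          rw [mul_assoc, ← Real.rpow_add hS]; norm_num
  rw [Real.rpow_neg hS.le, Real.rpow_neg hA.le, Real.rpow_neg hB.le, ← mul_inv, ← mul_inv]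
  exact inv_anti₀ (by positivity) h1

lemma sum_rpow_shift (p : ℝ) (hp : p < -1) :
    Summable (fun j : ℕ => ((j:ℝ) + 1) ^ p) := by
  have h : Summable (fun n : ℕ => (n : ℝ) ^ p) := Real.summable_nat_rpow.2 hp
  have h2 := (summable_nat_add_iff 1).2 h
  refine h2.congr fun j => ?_
  push_cast
  ring_nf

set_option maxHeartbeats 1000000 in
/-- If `μ` is a finite Borel measure supported in `[-1,1]` with `μ {−1,1} = 0` whose even
moments are dominated by `C_k / 4^k` (Catalan numbers), then `t ↦ log(1−t)/(1−t²)` is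
`μ`-integrable on `(-1,1)`. -/
theorem integrable_log_one_sub_div (μ : Measure ℝ) [IsFiniteMeasure μ]
    (hsupp : μ (Set.Icc (-1 : ℝ) 1)ᶜ = 0) (hpt : μ {(-1 : ℝ), 1} = 0)
    (hmom : ∀ k : ℕ, ∫⁻ t, ENNReal.ofReal (t ^ (2 * k)) ∂μ ≤
      ENNReal.ofReal ((catalan k : ℝ) / 4 ^ k)) :
    IntegrableOn (fun t : ℝ => Real.log (1 - t) / (1 - t ^ 2)) (Set.Ioo (-1 : ℝ) 1) μ := by
  have hl2 : (0:ℝ) ≤ Real.log 2 := Real.log_nonneg (by norm_num)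
  have hmeas : Measurable (fun t : ℝ => Real.log (1 - t) / (1 - t ^ 2)) :=
    (Real.measurable_log.comp (measurable_const.sub measurable_id)).div
      (measurable_const.sub (measurable_id.pow_const 2))
  -- moment bounds on the set
  have hb : ∀ j : ℕ, ∫⁻ t in Set.Ioo (-1 : ℝ) 1, ENNReal.ofReal (t ^ (2 * j)) ∂μ ≤
      ENNReal.ofReal (((j:ℝ) + 1) ^ (-(3/2) : ℝ)) := fun j =>
    (setLIntegral_le_lintegral _ _).trans
      ((hmom j).trans (ENNReal.ofReal_le_ofReal (catalan_bound j)))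
  -- summability of the bounds
  have hsumb : Summable (fun j : ℕ => ((j:ℝ) + 1) ^ (-(3/2) : ℝ)) :=
    sum_rpow_shift _ (by norm_num)
  have hsumc : Summable (fun j : ℕ => ((j:ℝ) + 1) ^ (-(5/4) : ℝ)) :=
    sum_rpow_shift _ (by norm_num)
  have hSb : (∑' j : ℕ, ENNReal.ofReal (((j:ℝ) + 1) ^ (-(3/2) : ℝ))) ≠ ⊤ := by
    rw [← ENNReal.ofReal_tsum_of_nonneg (fun j => Real.rpow_nonneg (by positivity) _) hsumb]
    exact ENNReal.ofReal_ne_top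
  have hSc : (∑' j : ℕ, ENNReal.ofReal (((j:ℝ) + 1) ^ (-(5/4) : ℝ))) ≠ ⊤ := by
    rw [← ENNReal.ofReal_tsum_of_nonneg (fun j => Real.rpow_nonneg (by positivity) _) hsumc]
    exact ENNReal.ofReal_ne_top
  refine ⟨hmeas.aestronglyMeasurable, ?_⟩
  rw [hasFiniteIntegral_iff_norm]
  -- main estimate
  have step1 : ∫⁻ t in Set.Ioo (-1 : ℝ) 1,
      ENNReal.ofReal ‖Real.log (1 - t) / (1 - t ^ 2)‖ ∂μ ≤
      ∫⁻ t in Set.Ioo (-1 : ℝ) 1,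
        ((∑' m : ℕ, ENNReal.ofReal (Real.log 2 * t ^ (2 * m))) +
         (∑' p : ℕ × ℕ, ENNReal.ofReal (t ^ (2 * (p.1 + 1 + p.2)) / (p.1 + 1)))) ∂μ := by
    refine lintegral_mono_ae ?_
    filter_upwards [ae_restrict_mem measurableSet_Ioo] with t ht
    rw [Real.norm_eq_abs]
    exact (ENNReal.ofReal_le_ofReal (ptwise ht.1 ht.2)).trans (series_bound ht.1 ht.2)
  have hF1meas : Measurable (fun t : ℝ =>
      ∑' m : ℕ, ENNReal.ofReal (Real.log 2 * t ^ (2 * m))) :=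
    Measurable.ennreal_tsum fun m =>
      ((measurable_id.pow_const (2 * m)).const_mul _).ennreal_ofReal
  have step2 : ∫⁻ t in Set.Ioo (-1 : ℝ) 1,
        ((∑' m : ℕ, ENNReal.ofReal (Real.log 2 * t ^ (2 * m))) +
         (∑' p : ℕ × ℕ, ENNReal.ofReal (t ^ (2 * (p.1 + 1 + p.2)) / (p.1 + 1)))) ∂μ =
      (∫⁻ t in Set.Ioo (-1 : ℝ) 1,
        (∑' m : ℕ, ENNReal.ofReal (Real.log 2 * t ^ (2 * m))) ∂μ) +
      (∫⁻ t in Set.Ioo (-1 : ℝ) 1,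
        (∑' p : ℕ × ℕ, ENNReal.ofReal (t ^ (2 * (p.1 + 1 + p.2)) / (p.1 + 1))) ∂μ) :=
    lintegral_add_left hF1meas _
  -- the first integral
  have part1 : (∫⁻ t in Set.Ioo (-1 : ℝ) 1,
      (∑' m : ℕ, ENNReal.ofReal (Real.log 2 * t ^ (2 * m))) ∂μ) <  ⊤ := by
    have hm1 : ∀ m : ℕ, AEMeasurable
        (fun t : ℝ => ENNReal.ofReal (Real.log 2 * t ^ (2 * m)))
        (μ.restrict (Set.Ioo (-1 : ℝ) 1)) := fun m => by fun_prop
    rw [lintegral_tsum hm1]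
    have hle : ∀ m : ℕ, (∫⁻ t in Set.Ioo (-1 : ℝ) 1,
        ENNReal.ofReal (Real.log 2 * t ^ (2 * m)) ∂μ) ≤
        ENNReal.ofReal (Real.log 2) * ENNReal.ofReal (((m:ℝ) + 1) ^ (-(3/2) : ℝ)) := by
      intro m
      have : (fun t : ℝ => ENNReal.ofReal (Real.log 2 * t ^ (2 * m))) =
          fun t => ENNReal.ofReal (Real.log 2) * ENNReal.ofReal (t ^ (2 * m)) :=
        funext fun t => ENNReal.ofReal_mul hl2
      rw [this, lintegral_const_mul _
        (by fun_prop : Measurable fun t : ℝ => ENNReal.ofReal (t ^ (2 * m)))]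
      exact mul_le_mul_right (hb m) _
    calc (∑' m : ℕ, ∫⁻ t in Set.Ioo (-1 : ℝ) 1,
          ENNReal.ofReal (Real.log 2 * t ^ (2 * m)) ∂μ)
        ≤ ∑' m : ℕ, ENNReal.ofReal (Real.log 2) *
            ENNReal.ofReal (((m:ℝ) + 1) ^ (-(3/2) : ℝ)) := ENNReal.tsum_le_tsum hle
      _ = ENNReal.ofReal (Real.log 2) *
            ∑' m : ℕ, ENNReal.ofReal (((m:ℝ) + 1) ^ (-(3/2) : ℝ)) := ENNReal.tsum_mul_left
      _ < ⊤ := ENNReal.mul_lt_top ENNReal.ofReal_lt_top (lt_top_iff_ne_top.2 hSb)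
  -- the second integral
  have part2 : (∫⁻ t in Set.Ioo (-1 : ℝ) 1,
      (∑' p : ℕ × ℕ, ENNReal.ofReal (t ^ (2 * (p.1 + 1 + p.2)) / (p.1 + 1))) ∂μ) < ⊤ := by
    have hm2 : ∀ p : ℕ × ℕ, AEMeasurable
        (fun t : ℝ => ENNReal.ofReal (t ^ (2 * (p.1 + 1 + p.2)) / (p.1 + 1)))
        (μ.restrict (Set.Ioo (-1 : ℝ) 1)) := fun p => by fun_prop
    rw [lintegral_tsum hm2]
    have hle : ∀ p : ℕ × ℕ, (∫⁻ t in Set.Ioo (-1 : ℝ) 1,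
        ENNReal.ofReal (t ^ (2 * (p.1 + 1 + p.2)) / (p.1 + 1)) ∂μ) ≤
        ENNReal.ofReal (((p.1:ℝ) + 1) ^ (-(5/4) : ℝ)) *
          ENNReal.ofReal (((p.2:ℝ) + 1) ^ (-(5/4) : ℝ)) := by
      rintro ⟨n, m⟩
      have hinv : (0:ℝ) ≤ (((n:ℝ) + 1))⁻¹ := by positivity
      have heq : (fun t : ℝ => ENNReal.ofReal (t ^ (2 * (n + 1 + m)) / ((n:ℝ) + 1))) =
          fun t => ENNReal.ofReal (t ^ (2 * (n + 1 + m))) *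
            ENNReal.ofReal ((((n:ℝ) + 1))⁻¹) := by
        funext t
        rw [div_eq_mul_inv, ENNReal.ofReal_mul' hinv]
      calc (∫⁻ t in Set.Ioo (-1 : ℝ) 1,
            ENNReal.ofReal (t ^ (2 * (n + 1 + m)) / ((n:ℝ) + 1)) ∂μ)
          = (∫⁻ t in Set.Ioo (-1 : ℝ) 1,
              ENNReal.ofReal (t ^ (2 * (n + 1 + m))) ∂μ) *
              ENNReal.ofReal ((((n:ℝ) + 1))⁻¹) := by
            rw [heq, lintegral_mul_const _
              (by fun_prop : Measurable fun t : ℝ => ENNReal.ofReal (t ^ (2 * (n + 1 + m))))]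
        _ ≤ ENNReal.ofReal ((((n + 1 + m : ℕ) : ℝ) + 1) ^ (-(3/2) : ℝ)) *
              ENNReal.ofReal ((((n:ℝ) + 1))⁻¹) := mul_le_mul_left (hb _) _
        _ = ENNReal.ofReal ((((n:ℝ) + 1))⁻¹ *
              (((n + 1 + m : ℕ) : ℝ) + 1) ^ (-(3/2) : ℝ)) := by
            rw [mul_comm, ← ENNReal.ofReal_mul hinv]
        _ ≤ ENNReal.ofReal (((n:ℝ) + 1) ^ (-(5/4) : ℝ) * ((m:ℝ) + 1) ^ (-(5/4) : ℝ)) :=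
            ENNReal.ofReal_le_ofReal (double_bound n m)
        _ = ENNReal.ofReal (((n:ℝ) + 1) ^ (-(5/4) : ℝ)) *
              ENNReal.ofReal (((m:ℝ) + 1) ^ (-(5/4) : ℝ)) :=
            ENNReal.ofReal_mul (Real.rpow_nonneg (by positivity) _)
    calc (∑' p : ℕ × ℕ, ∫⁻ t in Set.Ioo (-1 : ℝ) 1,
          ENNReal.ofReal (t ^ (2 * (p.1 + 1 + p.2)) / (p.1 + 1)) ∂μ)
        ≤ ∑' p : ℕ × ℕ, ENNReal.ofReal (((p.1:ℝ) + 1) ^ (-(5/4) : ℝ)) *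
            ENNReal.ofReal (((p.2:ℝ) + 1) ^ (-(5/4) : ℝ)) := ENNReal.tsum_le_tsum hle
      _ = (∑' n : ℕ, ENNReal.ofReal (((n:ℝ) + 1) ^ (-(5/4) : ℝ))) *
            (∑' m : ℕ, ENNReal.ofReal (((m:ℝ) + 1) ^ (-(5/4) : ℝ))) := by
          rw [ENNReal.tsum_prod (f := fun n m : ℕ =>
            ENNReal.ofReal (((n:ℝ) + 1) ^ (-(5/4) : ℝ)) *
              ENNReal.ofReal (((m:ℝ) + 1) ^ (-(5/4) : ℝ)))]
          simp_rw [ENNReal.tsum_mul_left, ENNReal.tsum_mul_right]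
      _ < ⊤ := ENNReal.mul_lt_top (lt_top_iff_ne_top.2 hSc) (lt_top_iff_ne_top.2 hSc)
  exact lt_of_le_of_lt (step1.trans_eq step2) (ENNReal.add_lt_top.2 ⟨part1, part2⟩)
end

section
/- Let μ be a Borel probability measure on ℝ with compact support which is absolutely continuous with respect to Lebesgue measure with essentially bounded density. Then the function (s,t) ↦ log|s − t| is integrable with respect to the product measure μ ⊗ μ; in particular the logarithmic energy ∫∫ log|s − t| dμ(s) dμ(t) is finite (strictly greater than −∞). -/
open MeasureTheory
open scoped ENNReal

/-!
A density bounded by `M` and carried by an interval `I` gives `μ ≤ M • volume|_I`, hence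
`μ ⊗ μ ≤ M² • volume|_{I × I}`. On `I × I`, `log |s - t|` agrees with the convolution integrand
`1_I(t) · (1_{I - I} log |·|)(s - t)`, which is Lebesgue integrable because `log` is locally
integrable.
-/

namespace MeasureTheory

section ComparisonOfMeasures

variable {α E : Type*} [MeasurableSpace α] [NormedAddCommGroup E]

lemma withDensity_ofReal_le_smul {ν : Measure α} {f : α → ℝ} {M : ℝ}
    (hM : ∀ᵐ x ∂ν, f x ≤ M) :
    ν.withDensity (fun x => ENNReal.ofReal (f x)) ≤ ENNReal.ofReal M • ν :=
  (withDensity_mono (hM.mono fun _ hx => ENNReal.ofReal_le_ofReal hx)).trans_eq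
    (withDensity_const _)

lemma Integrable.mono_prod_smul_measure {μ ν : Measure α} [SFinite ν] {c : ℝ≥0∞}
    (hc : c ≠ ∞) (hμ : μ ≤ c • ν) {g : α × α → E} (hg : Integrable g (ν.prod ν)) :
    Integrable g (μ.prod μ) := by
  refine (hg.smul_measure (ENNReal.mul_ne_top hc hc)).mono_measure ?_
  calc μ.prod μ ≤ (c • ν).prod (c • ν) := Measure.prod_mono hμ hμ
    _ = (c * c) • ν.prod ν := by
      rw [Measure.prod_smul_left, Measure.prod_smul_right, smul_smul]

end ComparisonOfMeasures

section DifferenceIntegrand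

variable {G E : Type*} [AddGroup G] [MeasurableSpace G] [MeasurableAdd₂ G] [MeasurableNeg G]
  [NormedAddCommGroup E] [NormedSpace ℝ E] {μ ν : Measure G} [SFinite μ] [μ.IsAddRightInvariant]
  [SFinite ν]

theorem IntegrableOn.comp_sub_prod {g : G → E} {s t u : Set G} (hg : IntegrableOn g u μ)
    (hu : MeasurableSet u) (ht : MeasurableSet t) (hνt : ν t ≠ ∞)
    (hstu : ∀ x ∈ s, ∀ y ∈ t, x - y ∈ u) :
    IntegrableOn (fun p : G × G => g (p.1 - p.2)) (s ×ˢ t) (μ.prod ν) := by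
  have hconv : Integrable (fun p : G × G =>
      t.indicator (fun _ => (1 : ℝ)) p.2 • u.indicator g (p.1 - p.2)) (μ.prod ν) :=
    Integrable.convolution_integrand (ContinuousLinearMap.lsmul ℝ ℝ)
      ((integrable_indicator_iff ht).2 (integrableOn_const (C := (1 : ℝ)) hνt))
      ((integrable_indicator_iff hu).2 hg)
  have hW : MeasurableSet {p : G × G | p.1 - p.2 ∈ u ∧ p.2 ∈ t} :=
    (hu.preimage (measurable_fst.sub measurable_snd)).inter (ht.preimage measurable_snd)
  refine (hconv.integrableOn.congr_fun (fun p hp => ?_) hW).mono_set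
    fun p hp => ⟨hstu _ hp.1 _ hp.2, hp.2⟩
  simp [Set.indicator_of_mem hp.1, Set.indicator_of_mem hp.2]

end DifferenceIntegrand

end MeasureTheory

theorem logarithmic_energy_finite_general (μ : Measure ℝ)
    (hcompact : ∃ K : Set ℝ, IsCompact K ∧ μ Kᶜ = 0)
    (f : ℝ → ℝ) (hf : μ = MeasureTheory.volume.withDensity (fun t => ENNReal.ofReal (f t)))
    (M : ℝ) (hM : ∀ᵐ t ∂MeasureTheory.volume, f t ≤ M) :
    Integrable (fun p : ℝ × ℝ => Real.log |p.1 - p.2|) (μ.prod μ) := by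
  obtain ⟨K, hK, hKc⟩ := hcompact
  set I := Set.Icc (sInf K) (sSup K)
  have hKI : K ⊆ I := hK.isBounded.subset_Icc_sInf_sSup
  have hμ : μ ≤ ENNReal.ofReal M • volume.restrict I :=
    calc μ = μ.restrict I :=
          (Measure.restrict_eq_self_of_ae_mem
            (ae_iff.2 (measure_mono_null (Set.compl_subset_compl.2 hKI) hKc))).symm
      _ ≤ (ENNReal.ofReal M • volume).restrict I :=
          Measure.restrict_mono le_rfl (hf ▸ withDensity_ofReal_le_smul hM)
      _ = ENNReal.ofReal M • volume.restrict I := Measure.restrict_smul _ _ _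
  have hlog : IntegrableOn Real.log (Set.uIcc (sInf K - sSup K) (sSup K - sInf K)) :=
    (intervalIntegrable_iff' (a := sInf K - sSup K) (b := sSup K - sInf K)).1
      intervalIntegral.intervalIntegrable_log'
  simp_rw [Real.log_abs]
  refine Integrable.mono_prod_smul_measure ENNReal.ofReal_ne_top hμ ?_
  rw [Measure.prod_restrict]
  refine hlog.comp_sub_prod measurableSet_uIcc measurableSet_Icc (by simp [I])
    fun x hx y hy => Set.Icc_subset_uIcc ⟨?_, ?_⟩
  · linarith [hx.1, hy.2]
  · linarith [hx.2, hy.1]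

/-- If `μ` is a compactly supported Borel probability measure on `ℝ` with essentially bounded
density with respect to Lebesgue measure, then `(s,t) ↦ log |s − t|` is `μ ⊗ μ`-integrable;
in particular the logarithmic energy `∫∫ log |s − t| dμ dμ` is finite. -/
theorem logarithmic_energy_finite (μ : Measure ℝ) [IsProbabilityMeasure μ]
    (hcompact : ∃ K : Set ℝ, IsCompact K ∧ μ Kᶜ = 0)
    (f : ℝ → ℝ) (hf : μ = MeasureTheory.volume.withDensity (fun t => ENNReal.ofReal (f t)))
    (M : ℝ) (hM : ∀ᵐ t ∂MeasureTheory.volume, f t ≤ M) :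
    Integrable (fun p : ℝ × ℝ => Real.log |p.1 - p.2|) (μ.prod μ) :=
  logarithmic_energy_finite_general μ hcompact f hf M hM
end
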